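/- The kernel of the derivation D_1 on ℂ[t, x_1, ..., x_d] equals ℂ[t, z_2, ..., z_d][1/t] ∩ ℂ[t, x_1, ..., x_d], i.e. every polynomial f with D_1(f) = 0 can be written as a polynomial in t, z_2, ..., z_d divided by a power of t, and conversely every such element lying in the polynomial ring is killed by D_1. -/

import Mathlib

/-! `D₁` is a derivation with `D₁ t = 0` and `D₁ x₁ = t`, and it kills every `zᵢ`: under `D₁`
the summands of `zᵢ` telescope. Since `zᵢ = t^(i-1) xᵢ + (terms in t, x₁, …, x_{i-1})`, a power
of `t` moves every polynomial into `A[x₁]`, where `A := ℂ[t, z₂, …, z_d] ⊆ ker D₁`. Finally `x₁`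
is transcendental over `ker D₁`: on polynomials in `x₁` with constant coefficients, `D₁` acts as
`t · d/dx₁`, and `t` is a nonzerodivisor. So `D₁ (Σ aₖ x₁^k) = 0` with `aₖ ∈ A` forces
`aₖ = 0` for `k ≥ 1`. -/

open MvPolynomial Fin.NatCast

/-- The derivation `D₁ = Σ_{j=1}^{d} j·x_{j-1}·∂/∂x_j` on `ℂ[t, x_1, …, x_d]` (with `x_0 := t`). -/
noncomputable def D1 (d : ℕ) (f : MvPolynomial (Fin (d+1)) ℂ) : MvPolynomial (Fin (d+1)) ℂ :=
  ∑ j ∈ Finset.range d, (((j+1 : ℕ)) : ℂ) •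
    (X ((j : ℕ) : Fin (d+1)) * pderiv (((j+1 : ℕ)) : Fin (d+1)) f)

/-- The semi-invariant
`z_i = Σ_{k=0}^{i-2} (-1)^k C(i,k) x_{i-k} x_1^k t^{i-k-1} + (i-1)(-1)^{i+1} x_1^i`. -/
noncomputable def z (d i : ℕ) : MvPolynomial (Fin (d+1)) ℂ :=
  (∑ k ∈ Finset.range (i-1), ((-1:ℂ)^k * (i.choose k : ℂ)) •
      (X (((i-k : ℕ)) : Fin (d+1)) * X 1 ^ k * X 0 ^ (i-k-1))) +
  (((i-1 : ℕ) : ℂ) * (-1:ℂ)^(i+1)) • (X 1 ^ i : MvPolynomial (Fin (d+1)) ℂ)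

theorem Fin.natCast_ne_natCast {n a b : ℕ} (han : a ≤ n) (hbn : b ≤ n) (h : a ≠ b) :
    (a : Fin (n + 1)) ≠ b := by
  rw [ne_eq, Fin.ext_iff, Fin.val_cast_of_lt (by omega), Fin.val_cast_of_lt (by omega)]
  exact h

theorem MvPolynomial.exists_pow_mul_mem_of_forall_X {R σ : Type*} [CommSemiring R]
    {S : Subalgebra R (MvPolynomial σ R)} {t : MvPolynomial σ R} (ht : t ∈ S)
    (hX : ∀ i, ∃ n, t ^ n * X i ∈ S) (f : MvPolynomial σ R) : ∃ n, t ^ n * f ∈ S := by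
  induction f using MvPolynomial.induction_on with
  | C a => exact ⟨0, by simpa using S.algebraMap_mem a⟩
  | add p q hp hq =>
    obtain ⟨m, hm⟩ := hp
    obtain ⟨n, hn⟩ := hq
    refine ⟨m + n, ?_⟩
    rw [show t ^ (m + n) * (p + q) = t ^ m * p * t ^ n + t ^ m * (t ^ n * q) by ring]
    exact add_mem (mul_mem hm (pow_mem ht n)) (mul_mem (pow_mem ht m) hn)
  | mul_X p i hp =>
    obtain ⟨m, hm⟩ := hp
    obtain ⟨n, hn⟩ := hX i
    refine ⟨m + n, ?_⟩
    rw [pow_add, mul_mul_mul_comm]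
    exact mul_mem hm hn

namespace Derivation

open Polynomial

variable {R A : Type*} [CommRing R] [CommRing A] [Algebra R A] (D : Derivation R A A)
  {B : Subalgebra R A}

theorem apply_aeval_of_forall_mem_eq_zero (hB : ∀ b ∈ B, D b = 0) (s : A) (p : B[X]) :
    D (aeval s p) = aeval s (derivative p) * D s := by
  induction p using Polynomial.induction_on' with
  | add p q hp hq => rw [map_add, map_add, hp, hq, derivative_add, map_add, add_mul]
  | monomial n b =>
    have hb : D (algebraMap B A b) = 0 := hB b b.2
    rw [Polynomial.aeval_monomial, leibniz, leibniz_pow, hb, smul_zero, add_zero,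
      derivative_monomial, Polynomial.aeval_monomial]
    simp only [smul_eq_mul, nsmul_eq_mul, map_mul, _root_.map_natCast (algebraMap B A)]
    ring

theorem transcendental_of_forall_mem_eq_zero [IsAddTorsionFree B]
    (hB : ∀ b ∈ B, D b = 0) {s : A} (hs : D s ∈ nonZeroDivisors A) : Transcendental B s := by
  rw [transcendental_iff_injective, injective_iff_map_eq_zero]
  intro p
  induction h : p.natDegree using Nat.strong_induction_on generalizing p with
  | _ n ih =>
    intro hp
    by_cases hn : n = 0
    · rw [eq_C_of_natDegree_eq_zero (h.trans hn)] at hp ⊢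
      rw [Polynomial.aeval_C, Subalgebra.algebraMap_eq] at hp
      rw [(Subtype.coe_injective hp : p.coeff 0 = 0), map_zero]
    · have hdp : aeval s (derivative p) = 0 := by
        have := D.apply_aeval_of_forall_mem_eq_zero hB s p
        rw [hp, map_zero, eq_comm] at this
        exact (mul_right_mem_nonZeroDivisors_eq_zero_iff hs).mp this
      have := ih _ (h ▸ natDegree_derivative_lt (h ▸ hn)) _ rfl hdp
      exact absurd (h ▸ derivative_eq_zero.mp this) hn

theorem mem_of_mem_adjoin_of_apply_eq_zero [IsAddTorsionFree B]
    (hB : ∀ b ∈ B, D b = 0) {s : A} (hs : D s ∈ nonZeroDivisors A) {x : A}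
    (hx : x ∈ Algebra.adjoin B {s}) (hDx : D x = 0) : x ∈ B := by
  obtain ⟨p, rfl⟩ :=
    (Algebra.adjoin_singleton_eq_range_aeval B s ▸ hx : x ∈ (Polynomial.aeval s).range)
  have hp : derivative p = 0 := by
    apply (transcendental_iff_injective.mp (D.transcendental_of_forall_mem_eq_zero hB hs))
    rw [map_zero, ← mul_right_mem_nonZeroDivisors_eq_zero_iff hs,
      ← D.apply_aeval_of_forall_mem_eq_zero hB]
    exact hDx
  rw [eq_C_of_natDegree_eq_zero (derivative_eq_zero.mp hp)]
  simp

end Derivation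

noncomputable def derivationD1 (d : ℕ) :
    Derivation ℂ (MvPolynomial (Fin (d+1)) ℂ) (MvPolynomial (Fin (d+1)) ℂ) :=
  ∑ j ∈ Finset.range d,
    (((j + 1 : ℕ) : ℂ) • (X ((j : ℕ) : Fin (d+1)) : MvPolynomial (Fin (d+1)) ℂ)) •
      pderiv ((j + 1 : ℕ) : Fin (d+1))

section

variable {d : ℕ}

theorem derivationD1_apply (f : MvPolynomial (Fin (d+1)) ℂ) : derivationD1 d f = D1 d f := by
  rw [derivationD1, ← Derivation.coeFnAddMonoidHom_apply, map_sum, Finset.sum_apply, D1]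
  refine Finset.sum_congr rfl fun j _ => ?_
  rw [Derivation.coeFnAddMonoidHom_apply, Derivation.smul_apply, smul_assoc, smul_eq_mul]

theorem derivationD1_X {m : ℕ} (hm : m ≤ d) :
    derivationD1 d (X (m : Fin (d+1))) = (m : ℂ) • X ((m - 1 : ℕ) : Fin (d+1)) := by
  rw [derivationD1_apply, D1]
  rcases m with _ | m
  · rw [Nat.cast_zero (R := ℂ), zero_smul]
    refine Finset.sum_eq_zero fun j hj => ?_
    rw [pderiv_X_of_ne (Fin.natCast_ne_natCast hm (by simp at hj; omega) (by omega)), mul_zero,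
      smul_zero]
  · rw [Finset.sum_eq_single_of_mem m (Finset.mem_range.mpr hm), pderiv_X_self, mul_one,
      Nat.add_sub_cancel]
    intro j hj hne
    rw [pderiv_X_of_ne (Fin.natCast_ne_natCast hm (by simp at hj; omega) (by omega)), mul_zero,
      smul_zero]

theorem derivationD1_X_zero : derivationD1 d (X 0) = 0 := by
  simpa using derivationD1_X (d := d) (m := 0) (Nat.zero_le d)

theorem derivationD1_X_one (hd : 1 ≤ d) : derivationD1 d (X 1) = X 0 := by
  simpa using derivationD1_X (d := d) (m := 1) hd

theorem derivationD1_X_one_pow (hd : 1 ≤ d) (k : ℕ) :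
    derivationD1 d (X 1 ^ k) = (k : ℂ) • (X 1 ^ (k - 1) * X 0) := by
  rw [Derivation.leibniz_pow, derivationD1_X_one hd, smul_eq_mul, ← Nat.cast_smul_eq_nsmul ℂ]

theorem derivationD1_X_zero_pow (e : ℕ) : derivationD1 d (X 0 ^ e) = 0 := by
  rw [Derivation.leibniz_pow, derivationD1_X_zero, smul_zero, smul_zero]

noncomputable def zTelescope (d i k : ℕ) : MvPolynomial (Fin (d+1)) ℂ :=
  ((-1 : ℂ) ^ k * (i.choose k : ℂ) * k) •
    (X ((i - k : ℕ) : Fin (d+1)) * X 1 ^ (k - 1) * X 0 ^ (i - k))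

theorem derivationD1_z_summand {i k : ℕ} (hid : i ≤ d) (hk : k + 2 ≤ i) :
    derivationD1 d (((-1 : ℂ) ^ k * (i.choose k : ℂ)) •
        (X ((i - k : ℕ) : Fin (d+1)) * X 1 ^ k * X 0 ^ (i - k - 1))) =
      zTelescope d i k - zTelescope d i (k + 1) := by
  have hchoose : (C ((i.choose (k + 1) : ℕ) : ℂ) * C ((k + 1 : ℕ) : ℂ) :
      MvPolynomial (Fin (d+1)) ℂ) = C (i.choose k : ℂ) * C ((i - k : ℕ) : ℂ) := by
    rw [← map_mul, ← map_mul, ← Nat.cast_mul, ← Nat.cast_mul, Nat.choose_succ_right_eq]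
  have hX0 : (X 0 : MvPolynomial (Fin (d+1)) ℂ) ^ (i - k) = X 0 ^ (i - k - 1) * X 0 := by
    rw [← pow_succ]; congr 1; omega
  rw [Derivation.map_smul, Derivation.leibniz, Derivation.leibniz, derivationD1_X_zero_pow,
    derivationD1_X_one_pow (by omega), derivationD1_X (by omega), zTelescope, zTelescope,
    Nat.add_sub_cancel, Nat.sub_sub, hX0]
  simp only [smul_eq_mul, smul_eq_C_mul, map_mul, map_pow, map_neg, map_one]
  linear_combination (-(-1) ^ k * X ((i - (k + 1) : ℕ) : Fin (d+1)) * X 1 ^ k *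
    X 0 ^ (i - (k+1))) * hchoose

theorem derivationD1_z {i : ℕ} (hi : 2 ≤ i) (hid : i ≤ d) : derivationD1 d (z d i) = 0 := by
  rw [z, map_add, map_sum, Finset.sum_congr rfl fun k hk =>
      derivationD1_z_summand hid (by rw [Finset.mem_range] at hk; omega),
    Finset.sum_range_sub', Derivation.map_smul, derivationD1_X_one_pow (by omega)]
  obtain ⟨m, rfl⟩ : ∃ m, i = m + 2 := ⟨i - 2, by omega⟩
  simp only [zTelescope, Nat.cast_zero, mul_zero, zero_smul, zero_sub,
    show m + 2 - 1 = m + 1 from rfl, Nat.add_sub_cancel, Nat.choose_succ_self_right,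
    show m + 2 - (m + 1) = 1 by omega, Nat.cast_one, pow_one]
  rw [← pow_succ', smul_smul, ← neg_smul, ← add_smul]
  apply smul_eq_zero_of_left
  push_cast
  ring

variable (d) in
def kernelGenerators : Set (MvPolynomial (Fin (d+1)) ℂ) :=
  {X 0} ∪ {p | ∃ i, 2 ≤ i ∧ i ≤ d ∧ p = z d i}

theorem derivationD1_eq_zero_of_mem_adjoin {x : MvPolynomial (Fin (d+1)) ℂ}
    (hx : x ∈ Algebra.adjoin ℂ (kernelGenerators d)) : derivationD1 d x = 0 := by
  refine Derivation.eqOn_adjoin (D2 := 0) ?_ hx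
  rintro _ (rfl | ⟨i, hi, hid, rfl⟩)
  · exact derivationD1_X_zero
  · exact derivationD1_z hi hid

theorem z_add_two_eq (m : ℕ) : z d (m + 2) = X 0 ^ (m + 1) * X ((m + 2 : ℕ) : Fin (d+1)) +
    ∑ k ∈ Finset.range m, ((-1 : ℂ) ^ (k + 1) * ((m + 2).choose (k + 1) : ℂ)) •
      ((X 0 ^ (m - k) * X ((m + 1 - k : ℕ) : Fin (d+1))) * X 1 ^ (k + 1)) +
    (((m + 1 : ℕ) : ℂ) * (-1) ^ (m + 2 + 1)) • X 1 ^ (m + 2) := by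
  rw [z, show m + 2 - 1 = m + 1 from rfl, Finset.sum_range_succ']
  simp only [pow_zero, Nat.choose_zero_right, Nat.cast_one, mul_one, one_smul, Nat.sub_zero,
    show m + 2 - 1 = m + 1 from rfl]
  have hterm : ∀ k ∈ Finset.range m,
      (X ((m + 2 - (k + 1) : ℕ) : Fin (d+1)) * X 1 ^ (k + 1) * X 0 ^ (m + 2 - (k + 1) - 1) :
        MvPolynomial (Fin (d+1)) ℂ) =
        (X 0 ^ (m - k) * X ((m + 1 - k : ℕ) : Fin (d+1))) * X 1 ^ (k + 1) := by
    intro k hk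
    rw [show m + 2 - (k + 1) - 1 = m - k by omega, show m + 2 - (k + 1) = m + 1 - k by omega]
    ring
  rw [Finset.sum_congr rfl fun k hk => congrArg (_ • ·) (hterm k hk)]
  ring

theorem pow_mul_X_mem_adjoin {j : ℕ} (hj : j ≤ d) :
    X 0 ^ (j - 1) * X (j : Fin (d+1)) ∈ Algebra.adjoin ℂ (kernelGenerators d ∪ {X 1}) := by
  induction j using Nat.strong_induction_on with
  | _ j ih =>
    rcases j with _ | _ | m
    · exact Algebra.subset_adjoin (by simp [kernelGenerators])
    · exact Algebra.subset_adjoin (by simp)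
    · have hz : z d (m + 2) ∈ Algebra.adjoin ℂ (kernelGenerators d ∪ {X 1}) :=
        Algebra.subset_adjoin (Or.inl (Or.inr ⟨m + 2, le_add_self, hj, rfl⟩))
      have hX1 : X 1 ∈ Algebra.adjoin ℂ (kernelGenerators d ∪ {X 1}) :=
        Algebra.subset_adjoin (Or.inr rfl)
      rw [show m + 2 - 1 = m + 1 from rfl,
        eq_sub_of_add_eq (eq_sub_of_add_eq (z_add_two_eq m).symm)]
      refine sub_mem (sub_mem hz (Subalgebra.smul_mem _ (pow_mem hX1 _) _))
        (Subalgebra.sum_mem _ fun k hk => Subalgebra.smul_mem _ (mul_mem ?_ (pow_mem hX1 _)) _)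
      rw [Finset.mem_range] at hk
      simpa [show m + 1 - k - 1 = m - k by omega] using ih (m + 1 - k) (by omega) (by omega)

end

/-- `ker D₁ = ℂ[t, z_2, …, z_d][1/t] ∩ ℂ[t, x_1, …, x_d]`: a polynomial is killed by `D₁`
iff, after multiplying by a suitable power of `t`, it lies in the subalgebra generated by
`t` and the `z_i`. -/
theorem stmt4 (d : ℕ) (hd : 2 ≤ d) (f : MvPolynomial (Fin (d+1)) ℂ) :
    D1 d f = 0 ↔
      ∃ s : ℕ, (X 0 : MvPolynomial (Fin (d+1)) ℂ) ^ s * f ∈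
        Algebra.adjoin ℂ ({X 0} ∪ {p | ∃ i, 2 ≤ i ∧ i ≤ d ∧ p = z d i}) := by
  have hX0 : (X 0 : MvPolynomial (Fin (d+1)) ℂ) ∈ nonZeroDivisors _ :=
    mem_nonZeroDivisors_of_ne_zero (X_ne_zero 0)
  have hDts : ∀ s, derivationD1 d (X 0 ^ s * f) = X 0 ^ s * derivationD1 d f := by
    intro s
    rw [Derivation.leibniz, derivationD1_X_zero_pow, smul_zero, add_zero, smul_eq_mul]
  rw [← derivationD1_apply]
  constructor
  · intro hf
    obtain ⟨s, hs⟩ := MvPolynomial.exists_pow_mul_mem_of_forall_X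
      (Algebra.subset_adjoin (Or.inl (Or.inl rfl)) :
        X 0 ∈ Algebra.adjoin ℂ (kernelGenerators d ∪ {X 1}))
      (fun i => ⟨i - 1, by simpa using pow_mul_X_mem_adjoin i.is_le⟩) f
    rw [Algebra.adjoin_union_eq_adjoin_adjoin] at hs
    refine ⟨s, (derivationD1 d).mem_of_mem_adjoin_of_apply_eq_zero
      (fun _ => derivationD1_eq_zero_of_mem_adjoin) ?_ hs ?_⟩
    · rwa [derivationD1_X_one (by omega)]
    · rw [hDts, hf, mul_zero]
  · rintro ⟨s, hs⟩
    have := derivationD1_eq_zero_of_mem_adjoin hs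
    rw [hDts] at this
    exact (mul_left_mem_nonZeroDivisors_eq_zero_iff (pow_mem hX0 s)).mp this
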